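/- Let Ṽ be the normalised Arctic lemming operator and let s = (x₁⁽⁰⁾,x₂⁽⁰⁾,x₃⁽⁰⁾,u⁽⁰⁾) ∈ S^{3,1}, with trajectory (x₁⁽ᵏ⁾,x₂⁽ᵏ⁾,x₃⁽ᵏ⁾,u⁽ᵏ⁾) = Ṽ^k(s). Then the following are equivalent: (i) 6x₁⁽⁰⁾ ≤ 6x₂⁽⁰⁾ + 12x₃⁽⁰⁾; (ii) x₁⁽ᵏ⁾ ≤ 3x₂⁽ᵏ⁾ for all k ≥ 1; (iii) x₂⁽ᵏ⁾ ≥ 7/60 for all k ≥ 2; (iv) x₂⁽ᵏ⁾ ≥ 7/24 − (1/2)x₁⁽ᵏ⁾ for all k ≥ 2. Likewise, the following are equivalent: (i') 6x₁⁽⁰⁾ ≥ 6x₂⁽⁰⁾ + 12x₃⁽⁰⁾; (ii') x₁⁽ᵏ⁾ ≥ 3x₂⁽ᵏ⁾ for all k ≥ 1; (iii') x₂⁽ᵏ⁾ ≤ 7/60 for all k ≥ 2; (iv') x₂⁽ᵏ⁾ ≤ 7/24 − (1/2)x₁⁽ᵏ⁾ for all k ≥ 2. -/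
import Mathlib


/-- The normalised Arctic lemming gonosomal operator. -/
noncomputable def nArcticOp (p : ℝ × ℝ × ℝ × ℝ) : ℝ × ℝ × ℝ × ℝ :=
  ((6 * p.1 + 3 * p.2.1) / (12 * (p.1 + p.2.1 + p.2.2.1)),
   (3 * p.2.1 + 4 * p.2.2.1) / (12 * (p.1 + p.2.1 + p.2.2.1)),
   (3 * p.2.1 + 4 * p.2.2.1) / (12 * (p.1 + p.2.1 + p.2.2.1)),
   (6 * p.1 + 3 * p.2.1 + 4 * p.2.2.1) / (12 * (p.1 + p.2.1 + p.2.2.1)))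

/-- The set `S^{3,1}` of frequency distributions. -/
def S31 : Set (ℝ × ℝ × ℝ × ℝ) :=
  {p | 0 ≤ p.1 ∧ 0 ≤ p.2.1 ∧ 0 ≤ p.2.2.1 ∧ 0 ≤ p.2.2.2 ∧
       0 < p.1 + p.2.1 + p.2.2.1 ∧ 0 < p.2.2.2 ∧
       p.1 + p.2.1 + p.2.2.1 + p.2.2.2 = 1}

private lemma nArctic_mem_step {p : ℝ × ℝ × ℝ × ℝ} (hp : p ∈ S31) : nArcticOp p ∈ S31 := by
  obtain ⟨h1, h2, h3, h4, h5, h6, h7⟩ := hp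
  have hc : (0:ℝ) < 12 * (p.1 + p.2.1 + p.2.2.1) := by linarith
  simp only [S31, nArcticOp, Set.mem_setOf_eq]
  refine ⟨div_nonneg (by linarith) hc.le, div_nonneg (by linarith) hc.le,
    div_nonneg (by linarith) hc.le, div_nonneg (by linarith) hc.le, ?_, ?_, ?_⟩
  · have h : (6*p.1+3*p.2.1)/(12*(p.1+p.2.1+p.2.2.1)) + (3*p.2.1+4*p.2.2.1)/(12*(p.1+p.2.1+p.2.2.1))
        + (3*p.2.1+4*p.2.2.1)/(12*(p.1+p.2.1+p.2.2.1))
        = (6*p.1+9*p.2.1+8*p.2.2.1)/(12*(p.1+p.2.1+p.2.2.1)) := by ring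
    rw [h]; exact div_pos (by linarith) hc
  · exact div_pos (by linarith) hc
  · have h : (6*p.1+3*p.2.1)/(12*(p.1+p.2.1+p.2.2.1)) + (3*p.2.1+4*p.2.2.1)/(12*(p.1+p.2.1+p.2.2.1))
        + (3*p.2.1+4*p.2.2.1)/(12*(p.1+p.2.1+p.2.2.1))
        + (6*p.1+3*p.2.1+4*p.2.2.1)/(12*(p.1+p.2.1+p.2.2.1))
        = (12*(p.1+p.2.1+p.2.2.1))/(12*(p.1+p.2.1+p.2.2.1)) := by ring
    rw [h, div_self hc.ne']

private lemma nArctic_mem_iter {s : ℝ × ℝ × ℝ × ℝ} (hs : s ∈ S31) (k : ℕ) :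
    nArcticOp^[k] s ∈ S31 := by
  induction k with
  | zero => simpa using hs
  | succ n ih => rw [Function.iterate_succ_apply']; exact nArctic_mem_step ih

private lemma nArctic_eq23 (p : ℝ × ℝ × ℝ × ℝ) :
    (nArcticOp p).2.1 = (nArcticOp p).2.2.1 := rfl

private lemma step_le_iff {p : ℝ × ℝ × ℝ × ℝ} (hp : p ∈ S31) :
    (nArcticOp p).1 ≤ 3 * (nArcticOp p).2.1 ↔ 6 * p.1 ≤ 6 * p.2.1 + 12 * p.2.2.1 := by
  have hc : (0:ℝ) < 12 * (p.1 + p.2.1 + p.2.2.1) := by linarith [hp.2.2.2.2.1]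
  simp only [nArcticOp]
  rw [← mul_div_assoc, div_le_div_iff₀ hc hc]
  constructor <;> intro h <;> nlinarith [hc, h]

private lemma step_ge_iff {p : ℝ × ℝ × ℝ × ℝ} (hp : p ∈ S31) :
    3 * (nArcticOp p).2.1 ≤ (nArcticOp p).1 ↔ 6 * p.2.1 + 12 * p.2.2.1 ≤ 6 * p.1 := by
  have hc : (0:ℝ) < 12 * (p.1 + p.2.1 + p.2.2.1) := by linarith [hp.2.2.2.2.1]
  simp only [nArcticOp]
  rw [← mul_div_assoc, div_le_div_iff₀ hc hc]
  constructor <;> intro h <;> nlinarith [hc, h]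

private lemma three_le_iff {p : ℝ × ℝ × ℝ × ℝ} (hp : p ∈ S31) (he : p.2.1 = p.2.2.1) :
    7 / 60 ≤ (nArcticOp p).2.1 ↔ p.1 ≤ 3 * p.2.1 := by
  have hc : (0:ℝ) < 12 * (p.1 + p.2.1 + p.2.2.1) := by linarith [hp.2.2.2.2.1]
  simp only [nArcticOp]
  rw [le_div_iff₀ hc]
  constructor <;> intro h <;> nlinarith [he]

private lemma three_ge_iff {p : ℝ × ℝ × ℝ × ℝ} (hp : p ∈ S31) (he : p.2.1 = p.2.2.1) :
    (nArcticOp p).2.1 ≤ 7 / 60 ↔ 3 * p.2.1 ≤ p.1 := by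
  have hc : (0:ℝ) < 12 * (p.1 + p.2.1 + p.2.2.1) := by linarith [hp.2.2.2.2.1]
  simp only [nArcticOp]
  rw [div_le_iff₀ hc]
  constructor <;> intro h <;> nlinarith [he]

private lemma four_le_iff {p : ℝ × ℝ × ℝ × ℝ} (hp : p ∈ S31) (he : p.2.1 = p.2.2.1) :
    7 / 24 - (1 / 2) * (nArcticOp p).1 ≤ (nArcticOp p).2.1 ↔ p.1 ≤ 3 * p.2.1 := by
  have hc : (0:ℝ) < 12 * (p.1 + p.2.1 + p.2.2.1) := by linarith [hp.2.2.2.2.1]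
  simp only [nArcticOp]
  rw [sub_le_iff_le_add]
  have h : (3*p.2.1+4*p.2.2.1)/(12*(p.1+p.2.1+p.2.2.1))
      + 1/2 * ((6*p.1+3*p.2.1)/(12*(p.1+p.2.1+p.2.2.1)))
      = (3*p.1 + 9/2*p.2.1 + 4*p.2.2.1)/(12*(p.1+p.2.1+p.2.2.1)) := by ring
  rw [h, le_div_iff₀ hc]
  constructor <;> intro h' <;> nlinarith [he]

private lemma four_ge_iff {p : ℝ × ℝ × ℝ × ℝ} (hp : p ∈ S31) (he : p.2.1 = p.2.2.1) :
    (nArcticOp p).2.1 ≤ 7 / 24 - (1 / 2) * (nArcticOp p).1 ↔ 3 * p.2.1 ≤ p.1 := by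
  have hc : (0:ℝ) < 12 * (p.1 + p.2.1 + p.2.2.1) := by linarith [hp.2.2.2.2.1]
  simp only [nArcticOp]
  rw [le_sub_iff_add_le, add_comm]
  have h : 1/2 * ((6*p.1+3*p.2.1)/(12*(p.1+p.2.1+p.2.2.1)))
      + (3*p.2.1+4*p.2.2.1)/(12*(p.1+p.2.1+p.2.2.1))
      = (3*p.1 + 9/2*p.2.1 + 4*p.2.2.1)/(12*(p.1+p.2.1+p.2.2.1)) := by ring
  rw [h, div_le_iff₀ hc]
  constructor <;> intro h' <;> nlinarith [he]

theorem nArcticOp_equivalences (s : ℝ × ℝ × ℝ × ℝ) (hs : s ∈ S31) :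
    ((6 * s.1 ≤ 6 * s.2.1 + 12 * s.2.2.1 ↔
        ∀ k : ℕ, 1 ≤ k → (nArcticOp^[k] s).1 ≤ 3 * (nArcticOp^[k] s).2.1) ∧
     (6 * s.1 ≤ 6 * s.2.1 + 12 * s.2.2.1 ↔
        ∀ k : ℕ, 2 ≤ k → 7 / 60 ≤ (nArcticOp^[k] s).2.1) ∧
     (6 * s.1 ≤ 6 * s.2.1 + 12 * s.2.2.1 ↔
        ∀ k : ℕ, 2 ≤ k →
          7 / 24 - (1 / 2) * (nArcticOp^[k] s).1 ≤ (nArcticOp^[k] s).2.1)) ∧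
    ((6 * s.2.1 + 12 * s.2.2.1 ≤ 6 * s.1 ↔
        ∀ k : ℕ, 1 ≤ k → 3 * (nArcticOp^[k] s).2.1 ≤ (nArcticOp^[k] s).1) ∧
     (6 * s.2.1 + 12 * s.2.2.1 ≤ 6 * s.1 ↔
        ∀ k : ℕ, 2 ≤ k → (nArcticOp^[k] s).2.1 ≤ 7 / 60) ∧
     (6 * s.2.1 + 12 * s.2.2.1 ≤ 6 * s.1 ↔
        ∀ k : ℕ, 2 ≤ k →
          (nArcticOp^[k] s).2.1 ≤ 7 / 24 - (1 / 2) * (nArcticOp^[k] s).1)) := by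
  have hmem : ∀ k : ℕ, nArcticOp^[k] s ∈ S31 := nArctic_mem_iter hs
  have heq : ∀ k : ℕ, 1 ≤ k → (nArcticOp^[k] s).2.1 = (nArcticOp^[k] s).2.2.1 := by
    intro k hk
    obtain ⟨m, rfl⟩ : ∃ m, k = m + 1 := ⟨k - 1, by omega⟩
    rw [Function.iterate_succ_apply']
    exact nArctic_eq23 _
  -- key: for k ≥ 1 the inequality x₁ ≤ 3x₂ at step k is equivalent to the initial condition
  have keyle : ∀ k : ℕ, 1 ≤ k →
      ((nArcticOp^[k] s).1 ≤ 3 * (nArcticOp^[k] s).2.1 ↔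
        6 * s.1 ≤ 6 * s.2.1 + 12 * s.2.2.1) := by
    intro k hk
    induction k with
    | zero => omega
    | succ n ih =>
      rw [Function.iterate_succ_apply']
      rcases Nat.eq_zero_or_pos n with hn | hn
      · subst hn; simpa using step_le_iff (hmem 0)
      · rw [step_le_iff (hmem n)]
        have h23 := heq n hn
        rw [← ih hn]
        constructor <;> intro h <;> [linarith [h23, h]; linarith [h23, h]]
  have keyge : ∀ k : ℕ, 1 ≤ k →
      (3 * (nArcticOp^[k] s).2.1 ≤ (nArcticOp^[k] s).1 ↔
        6 * s.2.1 + 12 * s.2.2.1 ≤ 6 * s.1) := by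
    intro k hk
    induction k with
    | zero => omega
    | succ n ih =>
      rw [Function.iterate_succ_apply']
      rcases Nat.eq_zero_or_pos n with hn | hn
      · subst hn; simpa using step_ge_iff (hmem 0)
      · rw [step_ge_iff (hmem n)]
        have h23 := heq n hn
        rw [← ih hn]
        constructor <;> intro h <;> [linarith [h23, h]; linarith [h23, h]]
  refine ⟨⟨?_, ?_, ?_⟩, ?_, ?_, ?_⟩
  · constructor
    · intro h k hk; exact (keyle k hk).2 h
    · intro h; exact (keyle 1 le_rfl).1 (h 1 le_rfl)
  · constructor
    · intro h k hk
      obtain ⟨m, rfl⟩ : ∃ m, k = m + 1 := ⟨k - 1, by omega⟩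
      have hm : 1 ≤ m := by omega
      rw [Function.iterate_succ_apply']
      rw [three_le_iff (hmem m) (heq m hm)]
      have := (keyle m hm).2 h
      linarith [heq m hm, this]
    · intro h
      have h2 := h 2 le_rfl
      rw [show (2:ℕ) = 1 + 1 from rfl, Function.iterate_succ_apply',
        three_le_iff (hmem 1) (heq 1 le_rfl)] at h2
      exact (keyle 1 le_rfl).1 (by linarith [heq 1 le_rfl, h2])
  · constructor
    · intro h k hk
      obtain ⟨m, rfl⟩ : ∃ m, k = m + 1 := ⟨k - 1, by omega⟩
      have hm : 1 ≤ m := by omega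
      rw [Function.iterate_succ_apply']
      rw [four_le_iff (hmem m) (heq m hm)]
      have := (keyle m hm).2 h
      linarith [heq m hm, this]
    · intro h
      have h2 := h 2 le_rfl
      rw [show (2:ℕ) = 1 + 1 from rfl, Function.iterate_succ_apply',
        four_le_iff (hmem 1) (heq 1 le_rfl)] at h2
      exact (keyle 1 le_rfl).1 (by linarith [heq 1 le_rfl, h2])
  · constructor
    · intro h k hk; exact (keyge k hk).2 h
    · intro h; exact (keyge 1 le_rfl).1 (h 1 le_rfl)
  · constructor
    · intro h k hk
      obtain ⟨m, rfl⟩ : ∃ m, k = m + 1 := ⟨k - 1, by omega⟩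
      have hm : 1 ≤ m := by omega
      rw [Function.iterate_succ_apply']
      rw [three_ge_iff (hmem m) (heq m hm)]
      have := (keyge m hm).2 h
      linarith [heq m hm, this]
    · intro h
      have h2 := h 2 le_rfl
      rw [show (2:ℕ) = 1 + 1 from rfl, Function.iterate_succ_apply',
        three_ge_iff (hmem 1) (heq 1 le_rfl)] at h2
      exact (keyge 1 le_rfl).1 (by linarith [heq 1 le_rfl, h2])
  · constructor
    · intro h k hk
      obtain ⟨m, rfl⟩ : ∃ m, k = m + 1 := ⟨k - 1, by omega⟩
      have hm : 1 ≤ m := by omega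
      rw [Function.iterate_succ_apply']
      rw [four_ge_iff (hmem m) (heq m hm)]
      have := (keyge m hm).2 h
      linarith [heq m hm, this]
    · intro h
      have h2 := h 2 le_rfl
      rw [show (2:ℕ) = 1 + 1 from rfl, Function.iterate_succ_apply',
        four_ge_iff (hmem 1) (heq 1 le_rfl)] at h2
      exact (keyge 1 le_rfl).1 (by linarith [heq 1 le_rfl, h2])
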